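/- arXiv:1406.6474 — 2 statements merged into one kernel-verified Lean document; each statement's English description precedes it below -/
import Mathlib

section
/- Let P and Q be nonempty closed convex subsets of ℝ^D with E nonempty. For any p ∈ P ∖ E, either κ(p) = 1, or both 1 < κ(p) and κ(p) ≤ κ(Π_{Q'} p). Similarly, for any q ∈ Q' ∖ E, either κ(q) = 1, or both 1 < κ(q) and κ(q) ≤ κ(Π_P q). -/
open scoped RealInnerProductSpace Pointwise
open Metric Filter

noncomputable section

/-- Distance between two sets. -/
def sDist {X : Type*} [MetricSpace X] (K₁ K₂ : Set X) : ℝ :=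
  sInf (Set.image2 dist K₁ K₂)

/-- `y` is the nearest-point projection of `x` onto `C`. -/
def IsProjOn {X : Type*} [MetricSpace X] (C : Set X) (x y : X) : Prop :=
  y ∈ C ∧ ∀ z ∈ C, dist x y ≤ dist x z

/-!
For `x ∈ A \ B` the denominator of `κ(x) = d(x, A ∩ B) / max (d(x, A), d(x, B))` is
`d(x, B) ≤ d(x, A ∩ B)`, so `κ(x) ≥ 1`. If `κ(x) > 1`, the projection `w` of `x` onto `B` is not
in `A` and `κ(w) = d(w, A ∩ B) / d(w, A)`. For `e ∈ A ∩ B` the triangle `w x e` has a point `z` on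
the side `[x, e] ⊆ A` with `|wz| |xe| ≤ |wx| |we|` (the foot of the altitude from `w`, for which
the left side is twice the area, or else an endpoint); the infimum over `e` gives `κ(x) ≤ κ(w)`.

`E = P ∩ Q'` because `v` is the unique point of minimal norm of the closed convex set `cl(Q - P)`:
`p ∈ P` is at distance `‖v‖ = d(P, Q)` from `Q` iff `p + v ∈ Q`.
-/

section Triangle

variable {H : Type*} [NormedAddCommGroup H] [InnerProductSpace ℝ H]

theorem exists_norm_sub_smul_mul_norm_le (a b : H) :
    ∃ t ∈ Set.Icc (0 : ℝ) 1, ‖a - t • b‖ * ‖b‖ ≤ ‖a‖ * ‖a - b‖ := by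
  by_cases h₀ : ‖b‖ ≤ ‖a - b‖
  · exact ⟨0, by simp, by rw [zero_smul, sub_zero]; gcongr⟩
  by_cases h₁ : ‖b‖ ≤ ‖a‖
  · exact ⟨1, by simp, by rw [one_smul, mul_comm ‖a‖]; gcongr⟩
  push Not at h₀ h₁
  set i := ⟪a, b⟫ with hi
  have hb : 0 < ‖b‖ ^ 2 := by have := (norm_nonneg a).trans_lt h₁; positivity
  have hab : ‖a - b‖ ^ 2 = ‖a‖ ^ 2 - 2 * i + ‖b‖ ^ 2 := norm_sub_sq_real a b
  have hi_le : i ≤ ‖a‖ * ‖b‖ := real_inner_le_norm a b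
  -- `t • b` is the orthogonal projection of `a` onto the line through `b`
  set t := i / ‖b‖ ^ 2
  have hti : t * ‖b‖ ^ 2 = i := div_mul_cancel₀ i hb.ne'
  have hat : ‖a - t • b‖ ^ 2 * ‖b‖ ^ 2 = ‖a‖ ^ 2 * ‖b‖ ^ 2 - i ^ 2 := by
    rw [norm_sub_sq_real, real_inner_smul_right, norm_smul, Real.norm_eq_abs, mul_pow, sq_abs,
      ← hi, ← hti]
    ring
  refine ⟨t, ⟨div_nonneg ?_ hb.le, (div_le_one hb).2 ?_⟩, ?_⟩
  · nlinarith [pow_lt_pow_left₀ h₀ (norm_nonneg _) two_ne_zero, sq_nonneg ‖a‖]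
  · nlinarith [norm_nonneg a]
  · refine (pow_le_pow_iff_left₀ (by positivity) (by positivity) two_ne_zero).1 ?_
    rw [mul_pow, mul_pow, hat, hab]
    nlinarith [sq_nonneg (‖a‖ ^ 2 - i)]

theorem exists_mem_segment_dist_mul_dist_le (w x y : H) :
    ∃ z ∈ segment ℝ x y, dist w z * dist x y ≤ dist w x * dist w y := by
  obtain ⟨t, ht, h⟩ := exists_norm_sub_smul_mul_norm_le (w - x) (y - x)
  refine ⟨x + t • (y - x), segment_eq_image' ℝ x y ▸ ⟨t, ht, rfl⟩, ?_⟩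
  rwa [dist_eq_norm, dist_eq_norm, dist_eq_norm, dist_eq_norm, norm_sub_rev x y, sub_add_eq_sub_sub,
    ← sub_sub_sub_cancel_right w y x]

end Triangle

section Projection

theorem IsProjOn.infDist_eq {X : Type*} [MetricSpace X] {C : Set X} {x y : X}
    (h : IsProjOn C x y) : infDist x C = dist x y :=
  le_antisymm (infDist_le_dist_of_mem h.1) ((le_infDist ⟨y, h.1⟩).2 h.2)

variable {H : Type*} [NormedAddCommGroup H] [InnerProductSpace ℝ H]

theorem IsProjOn.eq_of_convex {C : Set H} (hC : Convex ℝ C) {x y y' : H}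
    (hy : IsProjOn C x y) (hy' : IsProjOn C x y') : y = y' := by
  have hd : ‖y' - x‖ = ‖y - x‖ := by
    simpa only [dist_eq_norm'] using le_antisymm (hy'.2 y hy.1) (hy.2 y' hy'.1)
  have hy_le_mid := hy.2 _ (hC hy.1 hy'.1 (by norm_num : (0 : ℝ) ≤ 1 / 2) (by norm_num : (0 : ℝ) ≤ 1 / 2)
    (by norm_num))
  have hsum : (y - x) + (y' - x) = (2 : ℝ) • ((1 / 2 : ℝ) • y + (1 / 2 : ℝ) • y' - x) := by
    module
  have hmid : 2 * ‖y - x‖ ≤ ‖(y - x) + (y' - x)‖ := by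
    rw [hsum, norm_smul, Real.norm_two, ← dist_eq_norm', ← dist_eq_norm']
    exact mul_le_mul_of_nonneg_left hy_le_mid zero_le_two
  have hpar := parallelogram_law_with_norm ℝ (y - x) (y' - x)
  rw [hd, sub_sub_sub_cancel_right] at hpar
  rw [← sub_eq_zero, ← norm_eq_zero]
  nlinarith [norm_nonneg (y - x), norm_nonneg (y - y')]

end Projection

section MinkowskiDifference

variable {H : Type*} [NormedAddCommGroup H]

theorem sDist_eq_infDist_zero_sub (P Q : Set H) : sDist P Q = infDist 0 (Q - P) := by
  rw [sDist, infDist_eq_iInf, ← sInf_image', ← Set.image2_sub, Set.image_image2, Set.image2_swap]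
  simp only [dist_eq_norm', sub_zero]

variable {P Q : Set H} {v : H}

theorem sDist_eq_norm_of_isProjOn (hv : IsProjOn (closure (Q - P)) 0 v) : sDist P Q = ‖v‖ := by
  rw [sDist_eq_infDist_zero_sub, ← infDist_closure, hv.infDist_eq, dist_zero_left]

theorem norm_le_dist_of_isProjOn (hv : IsProjOn (closure (Q - P)) 0 v) {p q : H} (hp : p ∈ P)
    (hq : q ∈ Q) : ‖v‖ ≤ dist p q := by
  simpa only [dist_eq_norm', sub_zero] using
    hv.2 (q - p) (subset_closure (Set.sub_mem_sub hq hp))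

variable [InnerProductSpace ℝ H] [ProperSpace H]

theorem infDist_eq_sDist_iff_add_mem (hP : Convex ℝ P) (hQ : Convex ℝ Q) (hQc : IsClosed Q)
    (hv : IsProjOn (closure (Q - P)) 0 v) {p : H} (hp : p ∈ P) :
    infDist p Q = sDist P Q ↔ p + v ∈ Q := by
  have hQne : Q.Nonempty := (closure_nonempty_iff.1 ⟨v, hv.1⟩).of_sub_left
  rw [sDist_eq_norm_of_isProjOn hv]
  constructor
  · intro h
    obtain ⟨q, hq, hpq⟩ := hQc.exists_infDist_eq_dist hQne p
    have hproj : IsProjOn (closure (Q - P)) 0 (q - p) := by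
      refine ⟨subset_closure (Set.sub_mem_sub hq hp), fun z hz => ?_⟩
      rw [dist_zero_left, ← dist_eq_norm', ← hpq, h, ← dist_zero_left]
      exact hv.2 z hz
    rw [hv.eq_of_convex (hQ.sub hP).closure hproj, add_sub_cancel]
    exact hq
  · intro h
    refine le_antisymm ?_ ((le_infDist hQne).2 fun q hq => norm_le_dist_of_isProjOn hv hp hq)
    exact (infDist_le_dist_of_mem h).trans_eq (dist_self_add_right v p)

theorem setOf_infDist_eq_sDist_eq_inter (hP : Convex ℝ P) (hQ : Convex ℝ Q) (hQc : IsClosed Q)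
    (hv : IsProjOn (closure (Q - P)) 0 v) :
    {p ∈ P | infDist p Q = sDist P Q} = P ∩ (fun q => q - v) '' Q := by
  ext p
  rw [Set.image_sub_right]
  exact and_congr_right (infDist_eq_sDist_iff_add_mem hP hQ hQc hv)

end MinkowskiDifference

section RegularityRatio

variable {X : Type*} [MetricSpace X]

def regularityRatio (A B : Set X) (x : X) : ℝ :=
  infDist x (A ∩ B) / max (infDist x A) (infDist x B)

variable {A B : Set X} {x : X}

theorem regularityRatio_comm (A B : Set X) : regularityRatio A B = regularityRatio B A := by
  funext x
  rw [regularityRatio, regularityRatio, Set.inter_comm, max_comm]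

theorem regularityRatio_of_mem_left (hx : x ∈ A) :
    regularityRatio A B x = infDist x (A ∩ B) / infDist x B := by
  rw [regularityRatio, infDist_zero_of_mem hx, max_eq_right infDist_nonneg]

theorem regularityRatio_of_mem_right (hx : x ∈ B) :
    regularityRatio A B x = infDist x (A ∩ B) / infDist x A := by
  rw [regularityRatio, infDist_zero_of_mem hx, max_eq_left infDist_nonneg]

theorem one_le_regularityRatio (hBc : IsClosed B) (hAB : (A ∩ B).Nonempty) (hx : x ∈ A \ B) :
    1 ≤ regularityRatio A B x := by
  rw [regularityRatio_of_mem_left hx.1,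
    one_le_div ((hBc.notMem_iff_infDist_pos (hAB.mono Set.inter_subset_right)).1 hx.2)]
  exact infDist_le_infDist_of_subset Set.inter_subset_right hAB

end RegularityRatio

section RegularityRatioMonotone

variable {H : Type*} [NormedAddCommGroup H] [InnerProductSpace ℝ H] {A B : Set H} {x w : H}

theorem regularityRatio_le_of_isProjOn (hA : Convex ℝ A) (hAc : IsClosed A)
    (hAB : (A ∩ B).Nonempty) (hx : x ∈ A) (hw : IsProjOn B x w)
    (hlt : 1 < regularityRatio A B x) : regularityRatio A B x ≤ regularityRatio A B w := by
  rw [regularityRatio_of_mem_left hx] at hlt ⊢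
  have hdB : 0 < infDist x B := infDist_nonneg.lt_of_ne fun h => by
    rw [← h, div_zero] at hlt
    exact zero_lt_one.not_gt hlt
  have hxE : infDist x B < infDist x (A ∩ B) := (one_lt_div hdB).1 hlt
  have hwA : w ∉ A := fun hwA =>
    hxE.not_ge (hw.infDist_eq ▸ infDist_le_dist_of_mem ⟨hwA, hw.1⟩)
  have hdA : 0 < infDist w A := (hAc.notMem_iff_infDist_pos (hAB.mono Set.inter_subset_left)).1 hwA
  rw [regularityRatio_of_mem_right hw.1, div_le_div_iff₀ hdB hdA, ← div_le_iff₀ hdB,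
    le_infDist hAB]
  intro e he
  rw [div_le_iff₀ hdB]
  obtain ⟨z, hz, hwz⟩ := exists_mem_segment_dist_mul_dist_le w x e
  calc infDist x (A ∩ B) * infDist w A ≤ dist w z * dist x e := by
        rw [mul_comm]
        exact mul_le_mul (infDist_le_dist_of_mem (hA.segment_subset hx he.1 hz))
          (infDist_le_dist_of_mem he) infDist_nonneg dist_nonneg
    _ ≤ dist w x * dist w e := hwz
    _ = dist w e * infDist x B := by rw [hw.infDist_eq, dist_comm w x, mul_comm]

theorem regularityRatio_eq_one_or_le_of_isProjOn (hA : Convex ℝ A) (hAc : IsClosed A)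
    (hBc : IsClosed B) (hAB : (A ∩ B).Nonempty) (hx : x ∈ A \ B) (hw : IsProjOn B x w) :
    regularityRatio A B x = 1 ∨
      (1 < regularityRatio A B x ∧ regularityRatio A B x ≤ regularityRatio A B w) := by
  rcases (one_le_regularityRatio hBc hAB hx).eq_or_lt with h | h
  · exact .inl h.symm
  · exact .inr ⟨h, regularityRatio_le_of_isProjOn hA hAc hAB hx.1 hw h⟩

end RegularityRatioMonotone

theorem stmt1_general {D : ℕ} (P Q : Set (EuclideanSpace ℝ (Fin D)))
    (hPc : IsClosed P) (hQc : IsClosed Q)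
    (hPconv : Convex ℝ P) (hQconv : Convex ℝ Q)
    (v : EuclideanSpace ℝ (Fin D)) (hv : IsProjOn (closure (Q - P)) 0 v)
    (E Q' : Set (EuclideanSpace ℝ (Fin D)))
    (hE : E = {p ∈ P | infDist p Q = sDist P Q})
    (hQ' : Q' = (fun q => q - v) '' Q)
    (hEne : E.Nonempty)
    (κ : EuclideanSpace ℝ (Fin D) → ℝ)
    (hκ : ∀ x, κ x = infDist x E / max (infDist x P) (infDist x Q')) :
    (∀ p ∈ P \ E, ∀ w, IsProjOn Q' p w →
        κ p = 1 ∨ (1 < κ p ∧ κ p ≤ κ w)) ∧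
    (∀ q ∈ Q' \ E, ∀ w, IsProjOn P q w →
        κ q = 1 ∨ (1 < κ q ∧ κ q ≤ κ w)) := by
  have hEPQ' : E = P ∩ Q' := by rw [hE, hQ', setOf_infDist_eq_sDist_eq_inter hPconv hQconv hQc hv]
  have hκ' : κ = regularityRatio P Q' := funext fun x => by rw [hκ, hEPQ', regularityRatio]
  have hQ'c : IsClosed Q' := by
    rw [hQ', Set.image_sub_right]
    exact hQc.preimage (continuous_add_const v)
  have hQ'conv : Convex ℝ Q' := by
    rw [hQ', Set.image_sub_right]
    exact hQconv.translate_preimage_left v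
  subst hκ' hEPQ'
  refine ⟨fun p hp w hw => ?_, fun q hq w hw => ?_⟩
  · rw [Set.sdiff_self_inter] at hp
    exact regularityRatio_eq_one_or_le_of_isProjOn hPconv hPc hQ'c hEne hp hw
  · rw [Set.inter_comm, Set.sdiff_self_inter] at hq
    rw [Set.inter_comm] at hEne
    rw [regularityRatio_comm]
    exact regularityRatio_eq_one_or_le_of_isProjOn hQ'conv hQ'c hPc hEne hq hw

theorem stmt1 {D : ℕ} (P Q : Set (EuclideanSpace ℝ (Fin D)))
    (hPne : P.Nonempty) (hQne : Q.Nonempty)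
    (hPc : IsClosed P) (hQc : IsClosed Q)
    (hPconv : Convex ℝ P) (hQconv : Convex ℝ Q)
    (v : EuclideanSpace ℝ (Fin D)) (hv : IsProjOn (closure (Q - P)) 0 v)
    (E Q' : Set (EuclideanSpace ℝ (Fin D)))
    (hE : E = {p ∈ P | infDist p Q = sDist P Q})
    (hQ' : Q' = (fun q => q - v) '' Q)
    (hEne : E.Nonempty)
    (κ : EuclideanSpace ℝ (Fin D) → ℝ)
    (hκ : ∀ x, κ x = infDist x E / max (infDist x P) (infDist x Q')) :
    (∀ p ∈ P \ E, ∀ w, IsProjOn Q' p w →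
        κ p = 1 ∨ (1 < κ p ∧ κ p ≤ κ w)) ∧
    (∀ q ∈ Q' \ E, ∀ w, IsProjOn P q w →
        κ q = 1 ∨ (1 < κ q ∧ κ q ≤ κ w)) :=
  stmt1_general P Q hPc hQc hPconv hQconv v hv E Q' hE hQ' hEne κ hκ
end
end

section
/- Let S (of size J × D) and T (of size K × D) be real matrices with orthonormal rows. If every singular value of S Tᵀ equals one, then c_F(null(S), null(T)) = 0. Otherwise, c_F(null(S), null(T)) equals the largest singular value of S Tᵀ that is strictly less than one. -/
open scoped RealInnerProductSpace
open Matrix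

noncomputable section

/-- The cosine of the Friedrichs angle between two subspaces. -/
def friedrichs {H : Type*} [NormedAddCommGroup H] [InnerProductSpace ℝ H]
    (U V : Submodule ℝ H) : ℝ :=
  sSup {t | ∃ u ∈ U ⊓ (U ⊓ V)ᗮ, ∃ v ∈ V ⊓ (U ⊓ V)ᗮ,
    ‖u‖ ≤ 1 ∧ ‖v‖ ≤ 1 ∧ t = ⟪u, v⟫}

/-- The nullspace `{x : Wx = 0}` of a matrix, as a subspace of Euclidean space. -/
def nullSpace {m D : ℕ} (W : Matrix (Fin m) (Fin D) ℝ) :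
    Submodule ℝ (EuclideanSpace ℝ (Fin D)) :=
  LinearMap.ker (W.mulVecLin.comp (WithLp.linearEquiv 2 ℝ (Fin D → ℝ)).toLinearMap)

/-- `σ` is a singular value of the matrix `M`: `σ ≥ 0` and `σ²` is an
eigenvalue of `M * Mᵀ`. -/
def IsSingularValue {J K : ℕ} (M : Matrix (Fin J) (Fin K) ℝ) (σ : ℝ) : Prop :=
  0 ≤ σ ∧ ∃ x : Fin J → ℝ, x ≠ 0 ∧ (M * Mᵀ).mulVec x = σ ^ 2 • x

/-!
Write `W = U ⊓ (U ⊓ V)ᗮ`. The Friedrichs cosine is the norm of `P_V` on `W`, so its square is the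
top eigenvalue of `P_W P_V P_W`; that eigenvalue is an eigenvalue `≠ 1` of `P_U P_V` on `U`, and
conversely every eigenvector of `P_U P_V` in `U` for an eigenvalue `a ≠ 1` lies in `W`.
For `a ∉ {0, 1}` the map `z ↦ P_V z - a z` sends such eigenvectors to eigenvectors of
`P_{Uᗮ} P_{Vᗮ}` in `Uᗮ`. Finally, for `U = null S` and `V = null T` with orthonormal rows,
`P_{Uᗮ} = SᵀS` and `P_{Vᗮ} = TᵀT`, and `x ↦ Sᵀx` identifies the eigenvalues of `P_{Uᗮ} P_{Vᗮ}`
on `Uᗮ` with those of `(STᵀ)(STᵀ)ᵀ`, the squared singular values of `STᵀ`.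
-/

namespace Submodule

variable {H : Type*} [NormedAddCommGroup H] [InnerProductSpace ℝ H]
  {K : Submodule ℝ H} [K.HasOrthogonalProjection]

lemma real_inner_starProjection_self (v : H) :
    ⟪v, K.starProjection v⟫ = ‖K.starProjection v‖ ^ 2 := by
  rw [← real_inner_self_eq_norm_sq, K.inner_starProjection_left_eq_right,
    starProjection_eq_self_iff.mpr (K.starProjection_apply_mem v)]

lemma starProjection_mem_orthogonal_of_le {N : Submodule ℝ H} (hN : N ≤ K) {v : H}
    (hv : v ∈ Nᗮ) : K.starProjection v ∈ Nᗮ := by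
  intro m hm
  rw [← K.inner_starProjection_left_eq_right, starProjection_eq_self_iff.mpr (hN hm)]
  exact hv m hm

lemma starProjection_inf_orthogonal_of_le {N : Submodule ℝ H} (hN : N ≤ K)
    [(K ⊓ Nᗮ).HasOrthogonalProjection] {v : H} (hv : v ∈ Nᗮ) :
    (K ⊓ Nᗮ).starProjection v = K.starProjection v :=
  eq_starProjection_of_mem_orthogonal
    (mem_inf.mpr ⟨K.starProjection_apply_mem v, starProjection_mem_orthogonal_of_le hN hv⟩)
    (orthogonal_le inf_le_left (K.sub_starProjection_mem_orthogonal v))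

end Submodule

open Submodule

section Friedrichs

variable {H : Type*} [NormedAddCommGroup H] [InnerProductSpace ℝ H] {U V : Submodule ℝ H}

lemma inner_le_friedrichs {u v : H} (hu : u ∈ U ⊓ (U ⊓ V)ᗮ) (hv : v ∈ V ⊓ (U ⊓ V)ᗮ)
    (hu₁ : ‖u‖ ≤ 1) (hv₁ : ‖v‖ ≤ 1) : ⟪u, v⟫ ≤ friedrichs U V := by
  refine le_csSup ⟨1, ?_⟩ ⟨u, hu, v, hv, hu₁, hv₁, rfl⟩
  rintro _ ⟨u, -, v, -, hu₁, hv₁, rfl⟩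
  exact (real_inner_le_norm u v).trans (mul_le_one₀ hu₁ (norm_nonneg v) hv₁)

lemma friedrichs_nonneg : 0 ≤ friedrichs U V := by
  simpa using inner_le_friedrichs (U := U) (V := V) (zero_mem _) (zero_mem _)
    (by simp) (by simp)

lemma inner_le_friedrichs_mul {u v : H} (hu : u ∈ U ⊓ (U ⊓ V)ᗮ) (hv : v ∈ V ⊓ (U ⊓ V)ᗮ) :
    ⟪u, v⟫ ≤ friedrichs U V * (‖u‖ * ‖v‖) := by
  rcases eq_or_ne u 0 with rfl | hu₀
  · simp
  rcases eq_or_ne v 0 with rfl | hv₀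
  · simp
  have hnu : 0 < ‖u‖ := norm_pos_iff.mpr hu₀
  have hnv : 0 < ‖v‖ := norm_pos_iff.mpr hv₀
  have h := inner_le_friedrichs (smul_mem _ ‖u‖⁻¹ hu) (smul_mem _ ‖v‖⁻¹ hv)
    (by rw [norm_smul, norm_inv, norm_norm, inv_mul_cancel₀ hnu.ne'])
    (by rw [norm_smul, norm_inv, norm_norm, inv_mul_cancel₀ hnv.ne'])
  rw [real_inner_smul_left, real_inner_smul_right, ← mul_assoc, ← mul_inv,
    inv_mul_le_iff₀ (by positivity)] at h
  linarith

variable [V.HasOrthogonalProjection]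

lemma norm_starProjection_le_friedrichs_mul {u : H} (hu : u ∈ U ⊓ (U ⊓ V)ᗮ) :
    ‖V.starProjection u‖ ≤ friedrichs U V * ‖u‖ := by
  have hv : V.starProjection u ∈ V ⊓ (U ⊓ V)ᗮ :=
    ⟨V.starProjection_apply_mem u, starProjection_mem_orthogonal_of_le inf_le_right hu.2⟩
  have h := inner_le_friedrichs_mul hu hv
  rw [real_inner_starProjection_self] at h
  rcases (norm_nonneg (V.starProjection u)).eq_or_lt with h₀ | hpos
  · rw [← h₀]; exact mul_nonneg friedrichs_nonneg (norm_nonneg u)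
  · nlinarith

lemma friedrichs_le {c : ℝ} (hc : 0 ≤ c)
    (h : ∀ u ∈ U ⊓ (U ⊓ V)ᗮ, ‖V.starProjection u‖ ≤ c * ‖u‖) : friedrichs U V ≤ c := by
  refine csSup_le ⟨0, 0, zero_mem _, 0, zero_mem _, by simp⟩ ?_
  rintro _ ⟨u, hu, v, hv, hu₁, hv₁, rfl⟩
  calc ⟪u, v⟫ = ⟪V.starProjection u, v⟫ := by
        rw [V.inner_starProjection_left_eq_right, starProjection_eq_self_iff.mpr hv.1]
    _ ≤ ‖V.starProjection u‖ * ‖v‖ := real_inner_le_norm _ _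
    _ ≤ (c * ‖u‖) * 1 := mul_le_mul (h u hu) hv₁ (norm_nonneg _) (by positivity)
    _ ≤ c := by nlinarith

end Friedrichs

section CompressionEigenvalues

variable {H : Type*} [NormedAddCommGroup H] [InnerProductSpace ℝ H]

/-- The squared cosines of the principal angles between `U` and `V`. -/
def compressionEigenvalues (U V : Submodule ℝ H) [U.HasOrthogonalProjection]
    [V.HasOrthogonalProjection] : Set ℝ :=
  {a | ∃ z ∈ U, z ≠ 0 ∧ U.starProjection (V.starProjection z) = a • z}

variable {U V : Submodule ℝ H} [U.HasOrthogonalProjection] [V.HasOrthogonalProjection]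

lemma norm_starProjection_sq_of_eigen {a : ℝ} {z : H} (hz : z ∈ U)
    (h : U.starProjection (V.starProjection z) = a • z) :
    ‖V.starProjection z‖ ^ 2 = a * ‖z‖ ^ 2 := by
  rw [← real_inner_starProjection_self, ← starProjection_eq_self_iff.mpr hz,
    U.inner_starProjection_left_eq_right, starProjection_eq_self_iff.mpr hz, h,
    real_inner_smul_right, real_inner_self_eq_norm_sq]

lemma le_one_of_mem_compressionEigenvalues {a : ℝ} (ha : a ∈ compressionEigenvalues U V) :
    a ≤ 1 := by
  obtain ⟨z, hz, hz₀, h⟩ := ha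
  have hpos : 0 < ‖z‖ ^ 2 := by positivity
  have hle : ‖V.starProjection z‖ ^ 2 ≤ ‖z‖ ^ 2 := by
    gcongr; exact V.norm_starProjection_apply_le z
  rw [norm_starProjection_sq_of_eigen hz h] at hle
  nlinarith

lemma mem_orthogonal_inf_of_eigen {a : ℝ} {z : H}
    (h : U.starProjection (V.starProjection z) = a • z) (ha : a ≠ 1) : z ∈ (U ⊓ V)ᗮ := by
  intro m hm
  have key : a * ⟪m, z⟫ = ⟪m, z⟫ := by
    rw [← real_inner_smul_right, ← h, ← U.inner_starProjection_left_eq_right,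
      starProjection_eq_self_iff.mpr hm.1, ← V.inner_starProjection_left_eq_right,
      starProjection_eq_self_iff.mpr hm.2]
  have : (a - 1) * ⟪m, z⟫ = 0 := by linarith
  exact (mul_eq_zero.mp this).resolve_left (sub_ne_zero.mpr ha)

lemma eigen_ne_one_of_mem_orthogonal_inf {a : ℝ} {z : H} (hz : z ∈ U) (hzN : z ∈ (U ⊓ V)ᗮ)
    (hz₀ : z ≠ 0) (h : U.starProjection (V.starProjection z) = a • z) : a ≠ 1 := by
  rintro rfl
  have hzV : z ∈ V := by
    rw [mem_iff_norm_starProjection, ← sq_eq_sq₀ (norm_nonneg _) (norm_nonneg _),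
      norm_starProjection_sq_of_eigen hz h, one_mul]
  have hz' : z ∈ (U ⊓ V) ⊓ (U ⊓ V)ᗮ := mem_inf.mpr ⟨mem_inf.mpr ⟨hz, hzV⟩, hzN⟩
  rw [inf_orthogonal_eq_bot, mem_bot] at hz'
  exact hz₀ hz'

lemma le_friedrichs_sq {a : ℝ} (ha : a ∈ compressionEigenvalues U V) (ha₁ : a ≠ 1) :
    a ≤ friedrichs U V ^ 2 := by
  obtain ⟨z, hz, hz₀, h⟩ := ha
  have hzW : z ∈ U ⊓ (U ⊓ V)ᗮ := mem_inf.mpr ⟨hz, mem_orthogonal_inf_of_eigen h ha₁⟩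
  have hpos : 0 < ‖z‖ ^ 2 := by positivity
  have hle : ‖V.starProjection z‖ ^ 2 ≤ (friedrichs U V * ‖z‖) ^ 2 := by
    gcongr; exact norm_starProjection_le_friedrichs_mul hzW
  rw [norm_starProjection_sq_of_eigen hz h, mul_pow] at hle
  exact le_of_mul_le_mul_right hle hpos

lemma mem_compressionEigenvalues_orthogonal {a : ℝ} (ha : a ∈ compressionEigenvalues U V)
    (ha₀ : a ≠ 0) (ha₁ : a ≠ 1) : a ∈ compressionEigenvalues Uᗮ Vᗮ := by
  obtain ⟨z, hz, hz₀, h⟩ := ha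
  set w := V.starProjection z - a • z
  have hwU : w ∈ Uᗮ := by
    simpa [w, h] using U.sub_starProjection_mem_orthogonal (V.starProjection z)
  have hw₀ : w ≠ 0 := by
    intro hw
    have hPz : V.starProjection z = a • z := sub_eq_zero.mp hw
    have hsq := norm_starProjection_sq_of_eigen hz h
    rw [hPz, norm_smul, mul_pow, Real.norm_eq_abs, sq_abs] at hsq
    have : a * (a - 1) * ‖z‖ ^ 2 = 0 := by linarith
    have hpos : ‖z‖ ^ 2 ≠ 0 := by positivity
    rcases mul_eq_zero.mp ((mul_eq_zero.mp this).resolve_right hpos) with h | h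
    exacts [ha₀ h, ha₁ (sub_eq_zero.mp h)]
  refine ⟨w, hwU, hw₀, ?_⟩
  have hVw : Vᗮ.starProjection w = a • (V.starProjection z - z) := by
    simp only [w, starProjection_orthogonal_val, map_sub, map_smul,
      starProjection_eq_self_iff.mpr (V.starProjection_apply_mem z)]
    module
  have hUz : Uᗮ.starProjection z = 0 := by
    rw [starProjection_apply_eq_zero_iff, orthogonal_orthogonal]; exact hz
  have hUPz : Uᗮ.starProjection (V.starProjection z) = w := by
    rw [starProjection_orthogonal_val, h]
  rw [hVw, map_smul, map_sub, hUz, hUPz, sub_zero]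

lemma mem_compressionEigenvalues_orthogonal_iff {a : ℝ} (ha₀ : a ≠ 0) (ha₁ : a ≠ 1) :
    a ∈ compressionEigenvalues Uᗮ Vᗮ ↔ a ∈ compressionEigenvalues U V := by
  refine ⟨fun h => ?_, fun h => mem_compressionEigenvalues_orthogonal h ha₀ ha₁⟩
  have h' := mem_compressionEigenvalues_orthogonal h ha₀ ha₁
  simpa only [compressionEigenvalues, orthogonal_orthogonal] using h'

end CompressionEigenvalues

section FiniteDimensional

variable {H : Type*} [NormedAddCommGroup H] [InnerProductSpace ℝ H] [FiniteDimensional ℝ H]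

lemma exists_top_eigenvector_starProjection_conj [Nontrivial H] (K L : Submodule ℝ H) :
    ∃ μ : ℝ, ∃ x : H, x ≠ 0 ∧ K.starProjection (L.starProjection (K.starProjection x)) = μ • x ∧
      ∀ y ∈ K, ‖L.starProjection y‖ ^ 2 ≤ μ * ‖y‖ ^ 2 := by
  let Q : H →ₗ[ℝ] H := (K.starProjection ∘L L.starProjection ∘L K.starProjection : H →L[ℝ] H)
  have hQ : Q.IsSymmetric := fun x y => by
    simp only [Q, ContinuousLinearMap.coe_coe, ContinuousLinearMap.comp_apply,
      inner_starProjection_left_eq_right]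
  have hQself : ∀ x, ⟪Q x, x⟫ = ‖L.starProjection (K.starProjection x)‖ ^ 2 := fun x => by
    change ⟪K.starProjection (L.starProjection (K.starProjection x)), x⟫ = _
    rw [K.inner_starProjection_left_eq_right, real_inner_comm, real_inner_starProjection_self]
  have hbdd : BddAbove
      (Set.range fun x : {x : H // x ≠ 0} => RCLike.re ⟪Q x, x⟫ / ‖(x : H)‖ ^ 2) := by
    refine ⟨1, ?_⟩
    rintro _ ⟨x, rfl⟩
    have hx : 0 < ‖(x : H)‖ ^ 2 := by have := x.2; positivity
    dsimp only
    rw [RCLike.re_to_real, hQself, div_le_one hx]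
    gcongr
    exact (L.norm_starProjection_apply_le _).trans (K.norm_starProjection_apply_le _)
  obtain ⟨x, hx⟩ := hQ.hasEigenvalue_iSup_of_finiteDimensional.exists_hasEigenvector
  refine ⟨_, x, hx.2, Module.End.mem_eigenspace_iff.mp hx.1, fun y hyK => ?_⟩
  rcases eq_or_ne y 0 with rfl | hy₀
  · simp
  have hy := le_ciSup hbdd ⟨y, hy₀⟩
  rw [RCLike.re_to_real, hQself, starProjection_eq_self_iff.mpr hyK,
    div_le_iff₀ (by positivity)] at hy
  exact hy

lemma friedrichs_eq_zero_or (U V : Submodule ℝ H) :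
    friedrichs U V = 0 ∨ (0 < friedrichs U V ∧ friedrichs U V < 1 ∧
      friedrichs U V ^ 2 ∈ compressionEigenvalues U V) := by
  rcases subsingleton_or_nontrivial H with hH | hH
  · left
    refine le_antisymm (friedrichs_le le_rfl fun u _ => ?_) friedrichs_nonneg
    simp [Subsingleton.elim u 0]
  obtain ⟨μ, x, hx₀, hx, hμ⟩ := exists_top_eigenvector_starProjection_conj (U ⊓ (U ⊓ V)ᗮ) V
  have hf_le : friedrichs U V ≤ √μ := by
    refine friedrichs_le (Real.sqrt_nonneg _) fun u hu => ?_
    rw [← Real.sqrt_sq (norm_nonneg u), ← Real.sqrt_mul' _ (sq_nonneg _)]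
    exact Real.le_sqrt_of_sq_le (hμ u hu)
  rcases le_or_gt μ 0 with hμ₀ | hμ₀
  · exact .inl <| le_antisymm (hf_le.trans (Real.sqrt_eq_zero'.mpr hμ₀).le) friedrichs_nonneg
  have hxW : x ∈ U ⊓ (U ⊓ V)ᗮ := by
    rw [← inv_smul_smul₀ hμ₀.ne' x, ← hx]
    exact smul_mem _ _ (starProjection_apply_mem _ _)
  have heig : (U ⊓ (U ⊓ V)ᗮ).starProjection (V.starProjection x) = μ • x := by
    rwa [starProjection_eq_self_iff.mpr hxW] at hx
  have hUeig : U.starProjection (V.starProjection x) = μ • x := by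
    rw [← starProjection_inf_orthogonal_of_le inf_le_left
      (starProjection_mem_orthogonal_of_le inf_le_right hxW.2), heig]
  have hmem : μ ∈ compressionEigenvalues U V := ⟨x, hxW.1, hx₀, hUeig⟩
  have hμ₁ : μ ≠ 1 := eigen_ne_one_of_mem_orthogonal_inf hxW.1 hxW.2 hx₀ hUeig
  have hf_sq : friedrichs U V ^ 2 = μ := by
    refine le_antisymm ?_ (le_friedrichs_sq hmem hμ₁)
    calc friedrichs U V ^ 2 ≤ √μ ^ 2 := by gcongr; exact friedrichs_nonneg
      _ = μ := Real.sq_sqrt hμ₀.le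
  have hμ_lt : μ < 1 := lt_of_le_of_ne (le_one_of_mem_compressionEigenvalues hmem) hμ₁
  refine .inr ⟨?_, ?_, hf_sq ▸ hmem⟩
  · exact lt_of_le_of_ne friedrichs_nonneg fun h => by simp [← h] at hf_sq; linarith
  · nlinarith [friedrichs_nonneg (U := U) (V := V)]

end FiniteDimensional

section Matrix

variable {J K D : ℕ} {S : Matrix (Fin J) (Fin D) ℝ} {T : Matrix (Fin K) (Fin D) ℝ}

lemma mem_nullSpace_iff {z : EuclideanSpace ℝ (Fin D)} : z ∈ nullSpace S ↔ S *ᵥ z.ofLp = 0 :=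
  Iff.rfl

lemma toLp_transpose_mulVec_mem_orthogonal_nullSpace (x : Fin J → ℝ) :
    WithLp.toLp 2 (Sᵀ *ᵥ x) ∈ (nullSpace S)ᗮ := by
  intro y hy
  rw [EuclideanSpace.inner_eq_star_dotProduct, star_trivial, ← vecMul_transpose,
    transpose_transpose, ← dotProduct_mulVec, mem_nullSpace_iff.mp hy, dotProduct_zero]

lemma starProjection_orthogonal_nullSpace (hS : S * Sᵀ = 1) (z : EuclideanSpace ℝ (Fin D)) :
    (nullSpace S)ᗮ.starProjection z = WithLp.toLp 2 (Sᵀ *ᵥ S *ᵥ z.ofLp) := by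
  refine eq_starProjection_of_mem_orthogonal
    (toLp_transpose_mulVec_mem_orthogonal_nullSpace _) ?_
  rw [orthogonal_orthogonal, mem_nullSpace_iff, WithLp.ofLp_sub, mulVec_sub,
    mulVec_mulVec, hS, one_mulVec, sub_self]

lemma isSingularValue_iff (hS : S * Sᵀ = 1) (hT : T * Tᵀ = 1) {σ : ℝ} :
    IsSingularValue (S * Tᵀ) σ ↔
      0 ≤ σ ∧ σ ^ 2 ∈ compressionEigenvalues (nullSpace S)ᗮ (nullSpace T)ᗮ := by
  have hM : ∀ x, (S * Tᵀ * (S * Tᵀ)ᵀ) *ᵥ x = S *ᵥ Tᵀ *ᵥ T *ᵥ Sᵀ *ᵥ x := fun x => by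
    simp only [transpose_mul, transpose_transpose, mulVec_mulVec, Matrix.mul_assoc]
  have hSS : ∀ y, S *ᵥ Sᵀ *ᵥ y = y := fun y => by rw [mulVec_mulVec, hS, one_mulVec]
  refine and_congr_right fun _ => ⟨?_, ?_⟩
  · rintro ⟨x, hx₀, hx⟩
    refine ⟨WithLp.toLp 2 (Sᵀ *ᵥ x), toLp_transpose_mulVec_mem_orthogonal_nullSpace x, ?_, ?_⟩
    · intro h
      apply hx₀
      rw [← hSS x, ← WithLp.ofLp_toLp 2 (Sᵀ *ᵥ x), h, WithLp.ofLp_zero, mulVec_zero]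
    · rw [starProjection_orthogonal_nullSpace hT, starProjection_orthogonal_nullSpace hS,
        WithLp.ofLp_toLp, ← hM, hx, mulVec_smul, WithLp.toLp_smul]
  · rintro ⟨z, hz, hz₀, h⟩
    have hSz : Sᵀ *ᵥ S *ᵥ z.ofLp = z.ofLp := by
      conv_rhs => rw [← starProjection_eq_self_iff.mpr hz, starProjection_orthogonal_nullSpace hS]
    have hTz := congrArg WithLp.ofLp h
    rw [starProjection_orthogonal_nullSpace hT, starProjection_orthogonal_nullSpace hS,
      WithLp.ofLp_toLp, WithLp.ofLp_toLp, WithLp.ofLp_smul] at hTz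
    refine ⟨S *ᵥ z.ofLp, fun h₀ => hz₀ ?_, ?_⟩
    · rw [← WithLp.toLp_ofLp 2 z, ← hSz, h₀, mulVec_zero, WithLp.toLp_zero]
    · rw [hM, hSz, ← mulVec_smul, ← hTz, hSS]

lemma IsSingularValue.le_one (hS : S * Sᵀ = 1) (hT : T * Tᵀ = 1) {σ : ℝ}
    (h : IsSingularValue (S * Tᵀ) σ) : σ ≤ 1 := by
  obtain ⟨hσ, hmem⟩ := (isSingularValue_iff hS hT).mp h
  nlinarith [le_one_of_mem_compressionEigenvalues hmem]

lemma isSingularValue_iff_of_pos_of_lt_one (hS : S * Sᵀ = 1) (hT : T * Tᵀ = 1) {σ : ℝ}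
    (hσ₀ : 0 < σ) (hσ₁ : σ < 1) :
    IsSingularValue (S * Tᵀ) σ ↔ σ ^ 2 ∈ compressionEigenvalues (nullSpace S) (nullSpace T) := by
  rw [isSingularValue_iff hS hT, mem_compressionEigenvalues_orthogonal_iff (by positivity)
    (by nlinarith), and_iff_right hσ₀.le]

end Matrix

theorem stmt4 {J K D : ℕ}
    (S : Matrix (Fin J) (Fin D) ℝ) (T : Matrix (Fin K) (Fin D) ℝ)
    (hS : S * Sᵀ = 1) (hT : T * Tᵀ = 1) :
    ((∀ σ, IsSingularValue (S * Tᵀ) σ → σ = 1) →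
      friedrichs (nullSpace S) (nullSpace T) = 0) ∧
    ((∃ σ, IsSingularValue (S * Tᵀ) σ ∧ σ ≠ 1) →
      IsGreatest {σ | IsSingularValue (S * Tᵀ) σ ∧ σ < 1}
        (friedrichs (nullSpace S) (nullSpace T))) := by
  refine ⟨fun hall => ?_, fun ⟨σ₀, hσ₀, hσ₀₁⟩ => ?_⟩
  · rcases friedrichs_eq_zero_or (nullSpace S) (nullSpace T) with h | ⟨hpos, hlt, hmem⟩
    · exact h
    · exact absurd (hall _ ((isSingularValue_iff_of_pos_of_lt_one hS hT hpos hlt).2 hmem)) hlt.ne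
  have hub : ∀ σ ∈ {σ | IsSingularValue (S * Tᵀ) σ ∧ σ < 1},
      σ ≤ friedrichs (nullSpace S) (nullSpace T) := by
    rintro σ ⟨hσ, hσ₁⟩
    rcases hσ.1.eq_or_lt with rfl | hpos
    · exact friedrichs_nonneg
    · refine (pow_le_pow_iff_left₀ hσ.1 friedrichs_nonneg two_ne_zero).mp ?_
      exact le_friedrichs_sq ((isSingularValue_iff_of_pos_of_lt_one hS hT hpos hσ₁).1 hσ)
        (by nlinarith)
  refine ⟨?_, hub⟩
  rcases friedrichs_eq_zero_or (nullSpace S) (nullSpace T) with h | ⟨hpos, hlt, hmem⟩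
  · have hσ₀₁' : σ₀ < 1 := (hσ₀.le_one hS hT).lt_of_ne hσ₀₁
    have hσ₀0 : σ₀ = 0 := le_antisymm (h ▸ hub σ₀ ⟨hσ₀, hσ₀₁'⟩) hσ₀.1
    rw [h, ← hσ₀0]
    exact ⟨hσ₀, hσ₀₁'⟩
  · exact ⟨(isSingularValue_iff_of_pos_of_lt_one hS hT hpos hlt).2 hmem, hlt⟩
end
end
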